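/- Let ℒ_u(θ) = E_{z∼q_u}[ℓ_θ(x_u, z)] with gradient g_u(θ), and suppose z ↦ ∇_θℓ_θ(x,z) is L-Lipschitz uniformly in x. Define Δ(u,v) = ‖E_{q_v}[∇_θℓ_θ(x_u,z) − ∇_θℓ_θ(x_v,z)]‖. Then ‖g_v(θ) − g_u(θ)‖ ≤ Δ(u,v) + L·W₁(q_u, q_v), and consequently −⟨g_u, g_v⟩ ≤ −‖g_u‖² + ‖g_u‖(Δ(u,v) + L·W₁(q_u, q_v)). In particular the first-order SGD descent coefficient is strictly negative whenever W₁(q_u, q_v) < (‖g_u(θ)‖ − Δ(u,v))/L. -/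

import Mathlib

open MeasureTheory

/-- The 1-Wasserstein distance (Euclidean cost), defined as the infimum over couplings
of the expected distance. -/
noncomputable def W1 {X : Type*} [MeasurableSpace X] [PseudoMetricSpace X]
    (μ ν : Measure X) : ℝ :=
  sInf {c : ℝ | ∃ π : Measure (X × X), IsProbabilityMeasure π ∧
    π.map Prod.fst = μ ∧ π.map Prod.snd = ν ∧ c = ∫ p, dist p.1 p.2 ∂π}

/-! The gradient gap `g_v - g_u` splits as `-E_{q_v}[Gu - Gv] + (E_{q_v}[Gu] - E_{q_u}[Gu])`.
The first term is `Δ(u,v)`; the second is the change of expectation of the single `L`-Lipschitz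
map `Gu` between `q_u` and `q_v`, which on every coupling `π` is at most `L · E_π[dist]`, hence at
most `L · W₁(q_u, q_v)` (the easy half of Kantorovich–Rubinstein). The inner-product bounds then
follow from `⟪a, b⟫ = ‖a‖² + ⟪a, b - a⟫` and Cauchy–Schwarz. -/

section Wasserstein

variable {X : Type*} [MeasurableSpace X] [PseudoMetricSpace X]

theorem W1_nonneg (μ ν : Measure X) : 0 ≤ W1 μ ν :=
  Real.sInf_nonneg <| by
    rintro _ ⟨π, -, -, -, rfl⟩
    exact integral_nonneg fun _ => dist_nonneg

theorem le_mul_W1 {μ ν : Measure X} [IsProbabilityMeasure μ] [IsProbabilityMeasure ν]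
    {a K : ℝ} (hK : 0 ≤ K)
    (h : ∀ π : Measure (X × X), π.map Prod.fst = μ → π.map Prod.snd = ν →
      a ≤ K * ∫ q, dist q.1 q.2 ∂π) :
    a ≤ K * W1 μ ν := by
  rw [W1, ← smul_eq_mul, ← Real.sInf_smul_of_nonneg hK]
  refine le_csInf (Set.Nonempty.smul_set
    ⟨_, μ.prod ν, inferInstance, Measure.fst_prod, Measure.snd_prod, rfl⟩) ?_
  rintro _ ⟨_, ⟨π, -, hfst, hsnd, rfl⟩, rfl⟩
  exact h π hfst hsnd

end Wasserstein

section Lipschitz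

variable {X E : Type*} [SeminormedAddCommGroup X] [MeasurableSpace X]
  [NormedAddCommGroup E] {K : NNReal} {f : X → E}

theorem LipschitzWith.integrable_of_integrable_norm [OpensMeasurableSpace X]
    [SecondCountableTopology X] (hf : LipschitzWith K f) {μ : Measure X} [IsFiniteMeasure μ]
    (hμ : Integrable (fun z => ‖z‖) μ) : Integrable f μ := by
  refine ((integrable_const ‖f 0‖).add (hμ.const_mul K)).mono'
    hf.continuous.aestronglyMeasurable (.of_forall fun z => ?_)
  calc ‖f z‖ ≤ ‖f 0‖ + ‖f z - f 0‖ := norm_le_norm_add_norm_sub' _ _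
    _ ≤ ‖f 0‖ + K * ‖z‖ := by simpa using hf.norm_sub_le z 0

theorem integrable_dist_of_map_fst_of_map_snd [OpensMeasurableSpace X]
    [SecondCountableTopology X] {μ ν : Measure X} {π : Measure (X × X)}
    (hfst : π.map Prod.fst = μ) (hsnd : π.map Prod.snd = ν)
    (hμ : Integrable (fun z => ‖z‖) μ) (hν : Integrable (fun z => ‖z‖) ν) :
    Integrable (fun q : X × X => dist q.1 q.2) π := by
  subst hfst hsnd
  refine ((hμ.comp_measurable measurable_fst).add (hν.comp_measurable measurable_snd)).mono'
    continuous_dist.aestronglyMeasurable (.of_forall fun q => ?_)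
  simpa [dist_eq_norm] using norm_sub_le q.1 q.2

variable [NormedSpace ℝ E]

theorem LipschitzWith.norm_integral_sub_le_mul_integral_dist (hf : LipschitzWith K f)
    {π : Measure (X × X)} (h₁ : Integrable (fun q => f q.1) π)
    (h₂ : Integrable (fun q => f q.2) π) (hd : Integrable (fun q => dist q.1 q.2) π) :
    ‖∫ q, f q.2 ∂π - ∫ q, f q.1 ∂π‖ ≤ K * ∫ q, dist q.1 q.2 ∂π := by
  rw [← integral_sub h₂ h₁, ← integral_const_mul]
  refine (norm_integral_le_integral_norm _).trans <|
    integral_mono_of_nonneg (.of_forall fun _ => norm_nonneg _) (hd.const_mul _)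
      (.of_forall fun q => ?_)
  simpa [dist_comm q.1, dist_eq_norm] using hf.norm_sub_le q.2 q.1

theorem LipschitzWith.norm_integral_sub_le_mul_W1 [OpensMeasurableSpace X]
    [SecondCountableTopology X] (hf : LipschitzWith K f) {μ ν : Measure X}
    [IsProbabilityMeasure μ] [IsProbabilityMeasure ν]
    (hμ : Integrable (fun z => ‖z‖) μ) (hν : Integrable (fun z => ‖z‖) ν) :
    ‖∫ z, f z ∂ν - ∫ z, f z ∂μ‖ ≤ K * W1 μ ν := by
  refine le_mul_W1 K.coe_nonneg fun π hfst hsnd => ?_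
  subst hfst hsnd
  have hfμ := hf.integrable_of_integrable_norm hμ
  have hfν := hf.integrable_of_integrable_norm hν
  rw [integral_map measurable_fst.aemeasurable hfμ.aestronglyMeasurable,
    integral_map measurable_snd.aemeasurable hfν.aestronglyMeasurable]
  exact hf.norm_integral_sub_le_mul_integral_dist (hfμ.comp_measurable measurable_fst)
    (hfν.comp_measurable measurable_snd)
    (integrable_dist_of_map_fst_of_map_snd rfl rfl hμ hν)

end Lipschitz

section Inner

variable {F : Type*} [SeminormedAddCommGroup F] [InnerProductSpace ℝ F]

theorem norm_sq_sub_mul_norm_sub_le_inner (a b : F) :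
    ‖a‖ ^ 2 - ‖a‖ * ‖b - a‖ ≤ inner ℝ a b := by
  have hsplit : inner ℝ a b = ‖a‖ ^ 2 + inner ℝ a (b - a) := by
    rw [inner_sub_right, real_inner_self_eq_norm_sq]; ring
  have hcs : -(‖a‖ * ‖b - a‖) ≤ inner ℝ a (b - a) :=
    neg_le_of_abs_le (abs_real_inner_le_norm a (b - a))
  linarith

theorem inner_pos_of_norm_sub_lt {a b : F} (h : ‖b - a‖ < ‖a‖) : 0 < inner ℝ a b := by
  have ha : 0 < ‖a‖ := (norm_nonneg _).trans_lt h
  nlinarith [norm_sq_sub_mul_norm_sub_le_inner a b]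

end Inner

theorem sharing_radius_gradient_bound_general
    (d p : ℕ) (L : NNReal)
    (Gu Gv : EuclideanSpace ℝ (Fin d) → EuclideanSpace ℝ (Fin p))
    (hGu : LipschitzWith L Gu) (hGv : LipschitzWith L Gv)
    (qu qv : Measure (EuclideanSpace ℝ (Fin d)))
    [IsProbabilityMeasure qu] [IsProbabilityMeasure qv]
    (hqu : Integrable (fun z => ‖z‖) qu) (hqv : Integrable (fun z => ‖z‖) qv) :
    (‖(∫ z, Gv z ∂qv) - ∫ z, Gu z ∂qu‖
        ≤ ‖∫ z, (Gu z - Gv z) ∂qv‖ + (L : ℝ) * W1 qu qv)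
    ∧ (-(inner ℝ (∫ z, Gu z ∂qu) (∫ z, Gv z ∂qv) : ℝ)
        ≤ -‖∫ z, Gu z ∂qu‖ ^ 2
          + ‖∫ z, Gu z ∂qu‖ * (‖∫ z, (Gu z - Gv z) ∂qv‖ + (L : ℝ) * W1 qu qv))
    ∧ (W1 qu qv < (‖∫ z, Gu z ∂qu‖ - ‖∫ z, (Gu z - Gv z) ∂qv‖) / (L : ℝ) →
        0 < (inner ℝ (∫ z, Gu z ∂qu) (∫ z, Gv z ∂qv) : ℝ)) := by
  set gu := ∫ z, Gu z ∂qu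
  set gv := ∫ z, Gv z ∂qv
  set Δ := ‖∫ z, (Gu z - Gv z) ∂qv‖
  have hgrad : ‖gv - gu‖ ≤ Δ + L * W1 qu qv := by
    have hsplit : gv - gu = ((∫ z, Gu z ∂qv) - gu) - ∫ z, (Gu z - Gv z) ∂qv := by
      rw [integral_sub (hGu.integrable_of_integrable_norm hqv)
        (hGv.integrable_of_integrable_norm hqv)]
      abel
    rw [hsplit, add_comm]
    exact (norm_sub_le _ _).trans (add_le_add (hGu.norm_integral_sub_le_mul_W1 hqu hqv) le_rfl)
  refine ⟨hgrad, ?_, fun hlt => inner_pos_of_norm_sub_lt ?_⟩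
  · have := norm_sq_sub_mul_norm_sub_le_inner gu gv
    nlinarith [mul_le_mul_of_nonneg_left hgrad (norm_nonneg gu)]
  · have hL : 0 < (L : ℝ) := by
      rcases L.coe_nonneg.eq_or_lt with hL | hL
      · rw [← hL, div_zero] at hlt
        exact absurd hlt (W1_nonneg qu qv).not_gt
      · exact hL
    rw [lt_div_iff₀ hL] at hlt
    linarith

/-- **Gradient proximity and sharing radius.** Fix `θ`; let `Gu z = ∇_θℓ_θ(x_u, z)` and
`Gv z = ∇_θℓ_θ(x_v, z)`, both `L`-Lipschitz in `z` (Lipschitz uniformly in `x`), and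
let `g_u = E_{q_u}[Gu]`, `g_v = E_{q_v}[Gv]`, `Δ(u,v) = ‖E_{q_v}[Gu - Gv]‖`. Then
`‖g_v - g_u‖ ≤ Δ(u,v) + L·W₁(q_u, q_v)`, hence
`-⟨g_u, g_v⟩ ≤ -‖g_u‖² + ‖g_u‖(Δ(u,v) + L·W₁(q_u, q_v))`, and the first-order descent
coefficient is strictly negative (i.e. `⟨g_u, g_v⟩ > 0`) whenever
`W₁(q_u, q_v) < (‖g_u‖ - Δ(u,v))/L`. -/
theorem sharing_radius_gradient_bound
    (d p : ℕ) (L : NNReal) (hL : 0 < (L : ℝ))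
    (Gu Gv : EuclideanSpace ℝ (Fin d) → EuclideanSpace ℝ (Fin p))
    (hGu : LipschitzWith L Gu) (hGv : LipschitzWith L Gv)
    (qu qv : Measure (EuclideanSpace ℝ (Fin d)))
    [IsProbabilityMeasure qu] [IsProbabilityMeasure qv]
    (hqu : Integrable (fun z => ‖z‖) qu) (hqv : Integrable (fun z => ‖z‖) qv) :
    (‖(∫ z, Gv z ∂qv) - ∫ z, Gu z ∂qu‖
        ≤ ‖∫ z, (Gu z - Gv z) ∂qv‖ + (L : ℝ) * W1 qu qv)
    ∧ (-(inner ℝ (∫ z, Gu z ∂qu) (∫ z, Gv z ∂qv) : ℝ)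
        ≤ -‖∫ z, Gu z ∂qu‖ ^ 2
          + ‖∫ z, Gu z ∂qu‖ * (‖∫ z, (Gu z - Gv z) ∂qv‖ + (L : ℝ) * W1 qu qv))
    ∧ (W1 qu qv < (‖∫ z, Gu z ∂qu‖ - ‖∫ z, (Gu z - Gv z) ∂qv‖) / (L : ℝ) →
        0 < (inner ℝ (∫ z, Gu z ∂qu) (∫ z, Gv z ∂qv) : ℝ)) :=
  sharing_radius_gradient_bound_general d p L Gu Gv hGu hGv qu qv hqu hqv
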